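/- Let (E,H,F,X,Y) be an osp(1|2)-representation on a complex vector space W. Then the Casimir operator Ω and the super-Casimir operator Σ satisfy the identity Ω = (1/2)·Σ∘Σ − (1/8)·id as endomorphisms of W. -/

import Mathlib

/-- An `osp(1|2)`-representation on a complex vector space `W`: a 5-tuple of
endomorphisms `(E,H,F,X,Y)` satisfying the twelve defining relations of `osp(1|2)`
realized by ungraded operators. -/
def IsOspRep {W : Type*} [AddCommGroup W] [Module ℂ W]
    (E H F X Y : Module.End ℂ W) : Prop :=
  H * E - E * H = (2 : ℂ) • E ∧
  H * F - F * H = (-2 : ℂ) • F ∧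
  E * F - F * E = H ∧
  H * X - X * H = X ∧
  E * X - X * E = 0 ∧
  F * X - X * F = -Y ∧
  H * Y - Y * H = -Y ∧
  E * Y - Y * E = -X ∧
  F * Y - Y * F = 0 ∧
  X * X = E ∧
  X * Y + Y * X = H ∧
  Y * Y = -F

/-- The Casimir operator `Ω = E∘F + F∘E + (1/2)·H∘H + (1/2)·(Y∘X − X∘Y)`. -/
noncomputable def OmegaOsp {W : Type*} [AddCommGroup W] [Module ℂ W]
    (E H F X Y : Module.End ℂ W) : Module.End ℂ W :=
  E * F + F * E + (1/2 : ℂ) • (H * H) + (1/2 : ℂ) • (Y * X - X * Y)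

/-- The super-Casimir operator `Σ = X∘Y − Y∘X + (1/2)·id`. -/
noncomputable def SigmaOsp {W : Type*} [AddCommGroup W] [Module ℂ W]
    (X Y : Module.End ℂ W) : Module.End ℂ W :=
  X * Y - Y * X + (1/2 : ℂ) • (1 : Module.End ℂ W)

/-!
Write `A = XY` and `B = YX`, so that `H = A + B` and `Σ = A - B + 1/2`. Then
`(1/2)Σ² - 1/8 = (1/2)(A - B)² + (1/2)(A - B)` and `H² - (A - B)² = 2(AB + BA)`, so the identity
reduces to `EF + FE + AB + BA = A - B`. This follows from `EF = H + FE`, from `B` commuting with `H`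
(`X` and `Y` have opposite `H`-weights), and from `B² = BH + B + FE`, obtained by expanding
`B² = Y(XY)X = Y(H - B)X`.
-/

section Ring

variable {R : Type*} [Ring R] {E H F X Y : R}

theorem commute_mul_of_opposite_weights (hX : H * X - X * H = X) (hY : H * Y - Y * H = -Y) :
    Commute H (Y * X) := by
  have : H * (Y * X) - Y * X * H = (H * Y - Y * H) * X + Y * (H * X - X * H) := by noncomm_ring
  rw [hX, hY, neg_mul, neg_add_cancel] at this
  exact sub_eq_zero.mp this

theorem mul_self_eq_of_anticommutator (hH : X * Y + Y * X = H) (hX : H * X - X * H = X) :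
    Y * X * (Y * X) = Y * X * H + Y * X - Y * Y * (X * X) := by
  calc Y * X * (Y * X) = Y * (X * Y + Y * X) * X - Y * Y * (X * X) := by noncomm_ring
    _ = Y * (H * X - X * H) + Y * X * H - Y * Y * (X * X) := by rw [hH]; noncomm_ring
    _ = Y * X * H + Y * X - Y * Y * (X * X) := by rw [hX]; abel

theorem anticomm_add_anticomm_eq_commutator (hE : X * X = E) (hF : Y * Y = -F)
    (hH : X * Y + Y * X = H) (hEF : E * F - F * E = H)
    (hX : H * X - X * H = X) (hY : H * Y - Y * H = -Y) :
    E * F + F * E + X * Y * (Y * X) + Y * X * (X * Y) = X * Y - Y * X := by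
  have hcomm := commute_mul_of_opposite_weights hX hY
  have hsq := mul_self_eq_of_anticommutator hH hX
  rw [hE, hF, neg_mul, sub_neg_eq_add] at hsq
  have hXY : X * Y = H - Y * X := eq_sub_of_add_eq hH
  have hEF' : E * F = H + F * E := sub_eq_iff_eq_add.mp hEF
  rw [hXY, hEF', sub_mul, mul_sub, hcomm.eq, hsq, ← hH]
  abel

end Ring

/-- For any `osp(1|2)`-representation, `Ω = (1/2)·Σ∘Σ − (1/8)·id`. -/
theorem casimir_eq_half_superCasimir_sq {W : Type*} [AddCommGroup W] [Module ℂ W]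
    (E H F X Y : Module.End ℂ W) (hrep : IsOspRep E H F X Y) :
    OmegaOsp E H F X Y
      = (1/2 : ℂ) • (SigmaOsp X Y * SigmaOsp X Y)
        - (1/8 : ℂ) • (1 : Module.End ℂ W) := by
  obtain ⟨-, -, hEF, hX, -, -, hY, -, -, hE, hH, hF⟩ := hrep
  have key := anticomm_add_anticomm_eq_commutator hE hF hH hEF hX hY
  have hEF' : E * F + F * E = X * Y - Y * X - (X * Y * (Y * X) + Y * X * (X * Y)) := by
    rw [← key]; abel
  unfold OmegaOsp SigmaOsp
  rw [hEF', ← hH]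
  simp only [mul_add, add_mul, sub_mul, mul_sub, smul_mul_assoc, mul_smul_comm, mul_one, one_mul]
  module
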